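/- For every integer k > 2n+1, the colon ideals satisfy I^k : (c) = I^k and I^k : (d) = I^k. -/

import Mathlib

open MvPolynomial

noncomputable section

/-- The type of the `2n+4` variables `a, b, c, d, x₁, y₁, …, xₙ, yₙ`. -/
abbrev Vars (n : ℕ) : Type := Fin 4 ⊕ Fin n ⊕ Fin n

variable (K : Type*) [Field K] (n : ℕ)

/-- The variable `a`. -/
def va : MvPolynomial (Vars n) K := X (Sum.inl 0)
/-- The variable `b`. -/
def vb : MvPolynomial (Vars n) K := X (Sum.inl 1)
/-- The variable `c`. -/
def vc : MvPolynomial (Vars n) K := X (Sum.inl 2)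
/-- The variable `d`. -/
def vd : MvPolynomial (Vars n) K := X (Sum.inl 3)
/-- The variable `xᵢ` (for `i = 0, …, n-1` corresponding to `x₁, …, xₙ`). -/
def vx (i : Fin n) : MvPolynomial (Vars n) K := X (Sum.inr (Sum.inl i))
/-- The variable `yᵢ` (for `i = 0, …, n-1` corresponding to `y₁, …, yₙ`). -/
def vy (i : Fin n) : MvPolynomial (Vars n) K := X (Sum.inr (Sum.inr i))

/-- The monomial ideal
`I = (a⁶, a⁵b, ab⁵, b⁶, a⁴b⁴c, a⁴b⁴d, a⁴x₁y₁², b⁴x₁²y₁, …, a⁴xₙyₙ², b⁴xₙ²yₙ)`. -/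
def idealI : Ideal (MvPolynomial (Vars n) K) :=
  Ideal.span
    ({va K n ^ 6, va K n ^ 5 * vb K n, va K n * vb K n ^ 5, vb K n ^ 6,
      va K n ^ 4 * vb K n ^ 4 * vc K n, va K n ^ 4 * vb K n ^ 4 * vd K n} ∪
     Set.range (fun i => va K n ^ 4 * vx K n i * vy K n i ^ 2) ∪
     Set.range (fun i => vb K n ^ 4 * vx K n i ^ 2 * vy K n i))

/-- The graded maximal ideal `m = (a,b,c,d,x₁,y₁,…,xₙ,yₙ)`. -/
def mMax : Ideal (MvPolynomial (Vars n) K) := Ideal.span (Set.range X)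

namespace ColonAux

open Pointwise

/-- Index type for the generators of `J` (the ideal `I` without the two generators
involving `c` and `d`). -/
abbrev ιJ (n : ℕ) := Fin 4 ⊕ Fin n ⊕ Fin n
/-- Index type for the generators of `I`. -/
abbrev ιI (n : ℕ) := Fin 6 ⊕ Fin n ⊕ Fin n
/-- The variables other than the deleted one. -/
abbrev τ (n : ℕ) := Fin 3 ⊕ Fin n ⊕ Fin n

/-- The generators of `J`. -/
def genJ : ιJ n → MvPolynomial (Vars n) K
  | .inl ⟨0, _⟩ => va K n ^ 6
  | .inl ⟨1, _⟩ => va K n ^ 5 * vb K n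
  | .inl ⟨2, _⟩ => va K n * vb K n ^ 5
  | .inl ⟨3, _⟩ => vb K n ^ 6
  | .inl ⟨m + 4, h⟩ => absurd h (by omega)
  | .inr (.inl i) => va K n ^ 4 * vx K n i * vy K n i ^ 2
  | .inr (.inr i) => vb K n ^ 4 * vx K n i ^ 2 * vy K n i

/-- The generators of `I`, indexed. -/
def genI : ιI n → MvPolynomial (Vars n) K
  | .inl ⟨0, _⟩ => va K n ^ 6
  | .inl ⟨1, _⟩ => va K n ^ 5 * vb K n
  | .inl ⟨2, _⟩ => va K n * vb K n ^ 5
  | .inl ⟨3, _⟩ => vb K n ^ 6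
  | .inl ⟨4, _⟩ => va K n ^ 4 * vb K n ^ 4 * vc K n
  | .inl ⟨5, _⟩ => va K n ^ 4 * vb K n ^ 4 * vd K n
  | .inl ⟨m + 6, h⟩ => absurd h (by omega)
  | .inr (.inl i) => va K n ^ 4 * vx K n i * vy K n i ^ 2
  | .inr (.inr i) => vb K n ^ 4 * vx K n i ^ 2 * vy K n i

/-- The ideal `J`. -/
def idealJ : Ideal (MvPolynomial (Vars n) K) := Ideal.span (Set.range (genJ K n))

/-- The element `e = a⁴b⁴`. -/
def ee : MvPolynomial (Vars n) K := va K n ^ 4 * vb K n ^ 4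

lemma genJ_mem (j : ιJ n) : genJ K n j ∈ idealJ K n :=
  Ideal.subset_span ⟨j, rfl⟩

lemma mem_pow2 {A : Type*} [CommRing A] {J : Ideal A} {g g' u x : A}
    (hg : g ∈ J) (hg' : g' ∈ J) (hx : x = u * (g * g')) : x ∈ J ^ 2 := by
  subst hx
  exact Ideal.mul_mem_left _ _ (by rw [sq]; exact Ideal.mul_mem_mul hg hg')

lemma mem_pow3 {A : Type*} [CommRing A] {J : Ideal A} {g g' g'' u x : A}
    (hg : g ∈ J) (hg' : g' ∈ J) (hg'' : g'' ∈ J) (hx : x = u * (g * g' * g'')) : x ∈ J ^ 3 := by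
  subst hx
  refine Ideal.mul_mem_left _ _ ?_
  have : J ^ 3 = J * J * J := by ring
  rw [this]
  exact Ideal.mul_mem_mul (Ideal.mul_mem_mul hg hg') hg''

lemma mul_mem_pow_add {A : Type*} [CommRing A] {J : Ideal A} {u v : A} {s t m : ℕ}
    (hu : u ∈ J ^ s) (hv : v ∈ J ^ t) (h : m = s + t) : u * v ∈ J ^ m := by
  subst h; rw [pow_add]; exact Ideal.mul_mem_mul hu hv

lemma prod_mem_pow {A : Type*} [CommRing A] {ι : Type*} (J : Ideal A) (t : Finset ι)
    (g : ι → A) (h : ∀ i ∈ t, g i ∈ J) : ∏ i ∈ t, g i ∈ J ^ t.card := by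
  have := Ideal.prod_mem_prod (I := fun _ : ι => J) (s := t) (x := g) h
  simpa using this

/-- `e` times any of the four pure generators lies in `J²`. -/
lemma ee_mul_pure (j : Fin 4) : ee K n * genJ K n (Sum.inl j) ∈ idealJ K n ^ 2 := by
  fin_cases j
  · exact mem_pow2 (genJ_mem K n (Sum.inl 1)) (genJ_mem K n (Sum.inl 1))
      (by show _ = vb K n ^ 2 * _; simp only [genJ, ee]; ring)
  · exact mem_pow2 (genJ_mem K n (Sum.inl 0)) (genJ_mem K n (Sum.inl 2))
      (by show _ = va K n ^ 2 * _; simp only [genJ, ee]; ring)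
  · exact mem_pow2 (genJ_mem K n (Sum.inl 1)) (genJ_mem K n (Sum.inl 3))
      (by show _ = vb K n ^ 2 * _; simp only [genJ, ee]; ring)
  · exact mem_pow2 (genJ_mem K n (Sum.inl 2)) (genJ_mem K n (Sum.inl 2))
      (by show _ = va K n ^ 2 * _; simp only [genJ, ee]; ring)

lemma ee_mul_pp (i : Fin n) :
    ee K n * (genJ K n (Sum.inr (Sum.inl i)) * genJ K n (Sum.inr (Sum.inl i))) ∈
      idealJ K n ^ 3 := by
  exact mem_pow3 (genJ_mem K n (Sum.inl 0)) (genJ_mem K n (Sum.inl 0))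
    (genJ_mem K n (Sum.inr (Sum.inr i)))
    (by show _ = vy K n i ^ 3 * _; simp only [genJ, ee]; ring)

lemma ee_mul_qq (i : Fin n) :
    ee K n * (genJ K n (Sum.inr (Sum.inr i)) * genJ K n (Sum.inr (Sum.inr i))) ∈
      idealJ K n ^ 3 := by
  exact mem_pow3 (genJ_mem K n (Sum.inl 3)) (genJ_mem K n (Sum.inl 3))
    (genJ_mem K n (Sum.inr (Sum.inl i)))
    (by show _ = vx K n i ^ 3 * _; simp only [genJ, ee]; ring)

lemma ee_sq_mem : ee K n ^ 2 ∈ idealJ K n ^ 2 := by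
  exact mem_pow2 (genJ_mem K n (Sum.inl 1)) (genJ_mem K n (Sum.inl 2))
    (by show _ = va K n ^ 2 * vb K n ^ 2 * _; simp only [genJ, ee]; ring)

lemma ee_pow_even (s : ℕ) : ee K n ^ (2 * s) ∈ idealJ K n ^ (2 * s) := by
  induction s with
  | zero => simpa using Submodule.mem_top
  | succ s ih =>
      have h1 : 2 * (s + 1) = 2 * s + 2 := by ring
      rw [h1, pow_add, pow_add]
      exact Ideal.mul_mem_mul ih (ee_sq_mem K n)

/-- Pigeonhole: `e` times any product of `r ≥ 2n+1` generators of `J` lies in `J^(r+1)`. -/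
lemma pigeon (r : ℕ) (hr : 2 * n + 1 ≤ r) (G : Fin r → ιJ n) :
    ee K n * ∏ i, genJ K n (G i) ∈ idealJ K n ^ (r + 1) := by
  classical
  by_cases hA : ∃ i j4, G i = Sum.inl j4
  · obtain ⟨i, j4, hij⟩ := hA
    rw [← Finset.mul_prod_erase Finset.univ _ (Finset.mem_univ i)]
    have h2 : ∏ i' ∈ Finset.univ.erase i, genJ K n (G i') ∈ idealJ K n ^ (r - 1) := by
      have hc : (Finset.univ.erase i).card = r - 1 := by
        rw [Finset.card_erase_of_mem (Finset.mem_univ i)]; simp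
      rw [← hc]
      exact prod_mem_pow _ _ _ (fun i' _ => genJ_mem K n (G i'))
    have h1 : ee K n * genJ K n (G i) ∈ idealJ K n ^ 2 := by
      rw [hij]; exact ee_mul_pure K n j4
    have hx : ee K n * (genJ K n (G i) * ∏ i' ∈ Finset.univ.erase i, genJ K n (G i')) =
        (ee K n * genJ K n (G i)) * ∏ i' ∈ Finset.univ.erase i, genJ K n (G i') := by ring
    rw [hx]
    exact mul_mem_pow_add h1 h2 (by omega)
  · push_neg at hA
    have hA' : ∀ i, ∃ w, G i = Sum.inr w := by
      intro i
      cases h : G i with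
      | inl j => exact absurd h (hA i j)
      | inr w => exact ⟨w, rfl⟩
    choose W hW using hA'
    have hn : 0 < n := by
      rcases W ⟨0, by omega⟩ with j | j
      exacts [j.pos, j.pos]
    have hcard : Fintype.card (Fin n ⊕ Fin n) < Fintype.card (Fin r) := by
      simp only [Fintype.card_sum, Fintype.card_fin]
      omega
    obtain ⟨i, i', hne, heq⟩ := Fintype.exists_ne_map_eq_of_card_lt W hcard
    have hi' : i' ∈ Finset.univ.erase i := Finset.mem_erase.2 ⟨hne.symm, Finset.mem_univ i'⟩
    rw [← Finset.mul_prod_erase Finset.univ _ (Finset.mem_univ i),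
        ← Finset.mul_prod_erase _ _ hi']
    have h2 : ∏ i'' ∈ (Finset.univ.erase i).erase i', genJ K n (G i'') ∈
        idealJ K n ^ (r - 2) := by
      have hc : ((Finset.univ.erase i).erase i').card = r - 2 := by
        rw [Finset.card_erase_of_mem hi', Finset.card_erase_of_mem (Finset.mem_univ i)]
        simp only [Finset.card_univ, Fintype.card_fin]
        omega
      rw [← hc]
      exact prod_mem_pow _ _ _ (fun i'' _ => genJ_mem K n (G i''))
    have h1 : ee K n * (genJ K n (G i) * genJ K n (G i')) ∈ idealJ K n ^ 3 := by
      rw [hW i, hW i', heq]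
      cases W i' with
      | inl j => exact ee_mul_pp K n j
      | inr j => exact ee_mul_qq K n j
    have hx : ee K n * (genJ K n (G i) * (genJ K n (G i') *
          ∏ i'' ∈ (Finset.univ.erase i).erase i', genJ K n (G i''))) =
        (ee K n * (genJ K n (G i) * genJ K n (G i'))) *
          ∏ i'' ∈ (Finset.univ.erase i).erase i', genJ K n (G i'') := by ring
    rw [hx]
    exact mul_mem_pow_add h1 h2 (by omega)

/-- `e·J^r ⊆ J^(r+1)` for `r ≥ 2n+1`. -/
lemma ee_mul_mem (r : ℕ) (hr : 2 * n + 1 ≤ r) {w : MvPolynomial (Vars n) K}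
    (hw : w ∈ idealJ K n ^ r) : ee K n * w ∈ idealJ K n ^ (r + 1) := by
  have h1 : ee K n * w ∈ Ideal.span {ee K n} * idealJ K n ^ r :=
    Ideal.mul_mem_mul (Ideal.mem_span_singleton_self _) hw
  refine Set.mem_of_subset_of_mem ?_ h1
  show (Ideal.span {ee K n} * idealJ K n ^ r : Ideal _) ≤ idealJ K n ^ (r + 1)
  rw [idealJ]
  rw [show (Ideal.span (Set.range (genJ K n)) : Ideal (MvPolynomial (Vars n) K)) ^ r =
      Ideal.span (Set.range (genJ K n) ^ r) from Submodule.span_pow _ r, Ideal.span_mul_span']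
  rw [Ideal.span_le]
  rintro x ⟨u, hu, y, hy, rfl⟩
  rw [Set.mem_singleton_iff] at hu
  subst hu
  rw [Set.mem_pow] at hy
  obtain ⟨f, rfl⟩ := hy
  choose G hG using fun i => (f i).2
  have hprod : (List.ofFn fun i => ((f i : MvPolynomial (Vars n) K))).prod =
      ∏ i, genJ K n (G i) := by
    rw [List.prod_ofFn]
    exact Finset.prod_congr rfl (fun i _ => (hG i).symm)
  rw [hprod, ← idealJ]
  exact pigeon K n r hr G

/-- `e^t · J^(m-t) ⊆ J^m` for `t ≤ m` and `m ≥ 2n+2`. -/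
lemma ee_pow_mul_mem (m t : ℕ) (ht : t ≤ m) (hm : 2 * n + 2 ≤ m)
    {w : MvPolynomial (Vars n) K} (hw : w ∈ idealJ K n ^ (m - t)) :
    ee K n ^ t * w ∈ idealJ K n ^ m := by
  rcases Nat.even_or_odd t with ⟨s, hs⟩ | ⟨s, hs⟩
  · have hts : t = 2 * s := by omega
    subst hts
    exact mul_mem_pow_add (ee_pow_even K n s) hw (by omega)
  · have hts : t = 2 * s + 1 := by omega
    subst hts
    have h1 : ee K n ^ (2 * s) * w ∈ idealJ K n ^ (m - 1) :=
      mul_mem_pow_add (ee_pow_even K n s) hw (by omega)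
    have h2 : ee K n ^ (2 * s + 1) * w = ee K n * (ee K n ^ (2 * s) * w) := by ring
    rw [h2]
    have := ee_mul_mem K n (m - 1) (by omega) h1
    have hm1 : m - 1 + 1 = m := by omega
    rwa [hm1] at this

lemma genI_mem_J (j : ιI n) (h4 : j ≠ Sum.inl 4) (h5 : j ≠ Sum.inl 5) :
    genI K n j ∈ idealJ K n := by
  match j with
  | .inl ⟨0, _⟩ => exact genJ_mem K n (Sum.inl ⟨0, by omega⟩)
  | .inl ⟨1, _⟩ => exact genJ_mem K n (Sum.inl ⟨1, by omega⟩)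
  | .inl ⟨2, _⟩ => exact genJ_mem K n (Sum.inl ⟨2, by omega⟩)
  | .inl ⟨3, _⟩ => exact genJ_mem K n (Sum.inl ⟨3, by omega⟩)
  | .inl ⟨4, _⟩ => exact absurd rfl h4
  | .inl ⟨5, _⟩ => exact absurd rfl h5
  | .inl ⟨m + 6, h⟩ => exact absurd h (by omega)
  | .inr (.inl i) => exact genJ_mem K n (Sum.inr (Sum.inl i))
  | .inr (.inr i) => exact genJ_mem K n (Sum.inr (Sum.inr i))

lemma genI_cd (j : ιI n) (h : j = Sum.inl 4 ∨ j = Sum.inl 5) :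
    genI K n j ∈ Ideal.span {ee K n} := by
  rcases h with h | h <;> subst h <;>
    exact Ideal.mem_span_singleton.2 ⟨_, rfl⟩

/-- The master lemma: any product of `m ≥ 2n+2` generators of `I` lies in `J^m`. -/
lemma master (m : ℕ) (hm : 2 * n + 2 ≤ m) (F : Fin m → ιI n) :
    ∏ i, genI K n (F i) ∈ idealJ K n ^ m := by
  classical
  set T : Finset (Fin m) :=
    Finset.univ.filter (fun i => F i = Sum.inl 4 ∨ F i = Sum.inl 5) with hT
  have hsplit : (∏ i ∈ T, genI K n (F i)) * ∏ i ∈ Tᶜ, genI K n (F i) =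
      ∏ i, genI K n (F i) := Finset.prod_mul_prod_compl T _
  have hTcard : T.card ≤ m := by
    have := Finset.card_le_univ T
    simpa using this
  have hTc : ∏ i ∈ Tᶜ, genI K n (F i) ∈ idealJ K n ^ (m - T.card) := by
    have hc : Tᶜ.card = m - T.card := by
      rw [Finset.card_compl]; simp
    rw [← hc]
    refine prod_mem_pow _ _ _ (fun i hi => ?_)
    have hni : ¬(F i = Sum.inl 4 ∨ F i = Sum.inl 5) := by
      intro h
      exact (Finset.mem_compl.1 hi) (by rw [hT]; exact Finset.mem_filter.2 ⟨Finset.mem_univ i, h⟩)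
    push_neg at hni
    exact genI_mem_J K n (F i) hni.1 hni.2
  have hTe : ∏ i ∈ T, genI K n (F i) ∈ Ideal.span {ee K n ^ T.card} := by
    rw [← Ideal.span_singleton_pow]
    refine prod_mem_pow _ _ _ (fun i hi => ?_)
    exact genI_cd K n (F i) (by rw [hT] at hi; exact (Finset.mem_filter.1 hi).2)
  obtain ⟨u, hu⟩ := Ideal.mem_span_singleton.1 hTe
  rw [← hsplit, hu]
  have hmain : ee K n ^ T.card * ∏ i ∈ Tᶜ, genI K n (F i) ∈ idealJ K n ^ m :=
    ee_pow_mul_mem K n m T.card hTcard hm hTc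
  have hx : ee K n ^ T.card * u * ∏ i ∈ Tᶜ, genI K n (F i) =
      u * (ee K n ^ T.card * ∏ i ∈ Tᶜ, genI K n (F i)) := by ring
  rw [hx]
  exact Ideal.mul_mem_left _ _ hmain

lemma gensI_eq :
    ({va K n ^ 6, va K n ^ 5 * vb K n, va K n * vb K n ^ 5, vb K n ^ 6,
      va K n ^ 4 * vb K n ^ 4 * vc K n, va K n ^ 4 * vb K n ^ 4 * vd K n} ∪
     Set.range (fun i => va K n ^ 4 * vx K n i * vy K n i ^ 2) ∪
     Set.range (fun i => vb K n ^ 4 * vx K n i ^ 2 * vy K n i)) =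
    Set.range (genI K n) := by
  ext x
  simp only [Set.mem_union, Set.mem_insert_iff, Set.mem_singleton_iff, Set.mem_range]
  constructor
  · rintro ((h | ⟨i, hi⟩) | ⟨i, hi⟩)
    · rcases h with rfl | rfl | rfl | rfl | rfl | rfl
      · exact ⟨Sum.inl 0, rfl⟩
      · exact ⟨Sum.inl 1, rfl⟩
      · exact ⟨Sum.inl 2, rfl⟩
      · exact ⟨Sum.inl 3, rfl⟩
      · exact ⟨Sum.inl 4, rfl⟩
      · exact ⟨Sum.inl 5, rfl⟩
    · exact ⟨Sum.inr (Sum.inl i), hi⟩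
    · exact ⟨Sum.inr (Sum.inr i), hi⟩
  · rintro ⟨j, rfl⟩
    match j with
    | .inl ⟨0, _⟩ => exact Or.inl (Or.inl (Or.inl rfl))
    | .inl ⟨1, _⟩ => exact Or.inl (Or.inl (Or.inr (Or.inl rfl)))
    | .inl ⟨2, _⟩ => exact Or.inl (Or.inl (Or.inr (Or.inr (Or.inl rfl))))
    | .inl ⟨3, _⟩ => exact Or.inl (Or.inl (Or.inr (Or.inr (Or.inr (Or.inl rfl)))))
    | .inl ⟨4, _⟩ => exact Or.inl (Or.inl (Or.inr (Or.inr (Or.inr (Or.inr (Or.inl rfl))))))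
    | .inl ⟨5, _⟩ => exact Or.inl (Or.inl (Or.inr (Or.inr (Or.inr (Or.inr (Or.inr rfl))))))
    | .inl ⟨m + 6, h⟩ => exact absurd h (by omega)
    | .inr (.inl i) => exact Or.inl (Or.inr ⟨i, rfl⟩)
    | .inr (.inr i) => exact Or.inr ⟨i, rfl⟩

/-- For `k ≥ 2n+2`, `I^k = J^k`. -/
lemma pow_eq (k : ℕ) (hk : 2 * n + 1 < k) : idealI K n ^ k = idealJ K n ^ k := by
  apply le_antisymm
  · rw [idealI, gensI_eq]
    rw [show (Ideal.span (Set.range (genI K n)) : Ideal (MvPolynomial (Vars n) K)) ^ k =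
        Ideal.span (Set.range (genI K n) ^ k) from Submodule.span_pow _ k, Ideal.span_le]
    intro x hx
    rw [Set.mem_pow] at hx
    obtain ⟨f, rfl⟩ := hx
    choose F hF using fun i => (f i).2
    have hprod : (List.ofFn fun i => ((f i : MvPolynomial (Vars n) K))).prod =
        ∏ i, genI K n (F i) := by
      rw [List.prod_ofFn]
      exact Finset.prod_congr rfl (fun i _ => (hF i).symm)
    rw [hprod]
    exact master K n k (by omega) F
  · refine Ideal.pow_right_mono ?_ k
    rw [idealJ, Ideal.span_le]
    rintro x ⟨j, rfl⟩
    rw [idealI, gensI_eq]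
    match j with
    | .inl ⟨0, _⟩ => exact Ideal.subset_span ⟨Sum.inl 0, rfl⟩
    | .inl ⟨1, _⟩ => exact Ideal.subset_span ⟨Sum.inl 1, rfl⟩
    | .inl ⟨2, _⟩ => exact Ideal.subset_span ⟨Sum.inl 2, rfl⟩
    | .inl ⟨3, _⟩ => exact Ideal.subset_span ⟨Sum.inl 3, rfl⟩
    | .inl ⟨m + 4, h⟩ => exact absurd h (by omega)
    | .inr (.inl i) => exact Ideal.subset_span ⟨Sum.inr (Sum.inl i), rfl⟩
    | .inr (.inr i) => exact Ideal.subset_span ⟨Sum.inr (Sum.inr i), rfl⟩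

/-- The generators of `J` over the smaller variable set. -/
def genJ' : ιJ n → MvPolynomial (τ n) K
  | .inl ⟨0, _⟩ => X (Sum.inl 0) ^ 6
  | .inl ⟨1, _⟩ => X (Sum.inl 0) ^ 5 * X (Sum.inl 1)
  | .inl ⟨2, _⟩ => X (Sum.inl 0) * X (Sum.inl 1) ^ 5
  | .inl ⟨3, _⟩ => X (Sum.inl 1) ^ 6
  | .inl ⟨m + 4, h⟩ => absurd h (by omega)
  | .inr (.inl i) => X (Sum.inl 0) ^ 4 * X (Sum.inr (Sum.inl i)) * X (Sum.inr (Sum.inr i)) ^ 2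
  | .inr (.inr i) => X (Sum.inl 1) ^ 4 * X (Sum.inr (Sum.inl i)) ^ 2 * X (Sum.inr (Sum.inr i))

/-- Multiplication by a variable `v` not appearing among the generators of `J`
is injective modulo `J^k`. -/
lemma regular (E : Vars n ≃ Option (τ n)) (v : Vars n) (hv : E v = none)
    (ha : E (Sum.inl 0) = some (Sum.inl 0)) (hb : E (Sum.inl 1) = some (Sum.inl 1))
    (hxy : ∀ w : Fin n ⊕ Fin n, E (Sum.inr w) = some (Sum.inr w))
    (k : ℕ) (f : MvPolynomial (Vars n) K)
    (hf : f * X v ∈ idealJ K n ^ k) : f ∈ idealJ K n ^ k := by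
  set Φ : MvPolynomial (Vars n) K ≃+* Polynomial (MvPolynomial (τ n) K) :=
    ((renameEquiv K E).trans (optionEquivLeft K (τ n))).toRingEquiv with hΦ
  have hΦapp : ∀ p, Φ p = optionEquivLeft K (τ n) (rename E p) := fun p => rfl
  have hΦv : Φ (X v) = Polynomial.X := by
    rw [hΦapp, rename_X, hv, optionEquivLeft_X_none]
  have hΦg : ∀ j, Φ (genJ K n j) = Polynomial.C (genJ' K n j) := by
    intro j
    match j with
    | .inl ⟨0, _⟩ =>
        show Φ (va K n ^ 6) = _
        rw [hΦapp]
        simp [va, genJ', ha, optionEquivLeft_X_some]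
    | .inl ⟨1, _⟩ =>
        show Φ (va K n ^ 5 * vb K n) = _
        rw [hΦapp]
        simp [va, vb, genJ', ha, hb, optionEquivLeft_X_some]
    | .inl ⟨2, _⟩ =>
        show Φ (va K n * vb K n ^ 5) = _
        rw [hΦapp]
        simp [va, vb, genJ', ha, hb, optionEquivLeft_X_some]
    | .inl ⟨3, _⟩ =>
        show Φ (vb K n ^ 6) = _
        rw [hΦapp]
        simp [vb, genJ', hb, optionEquivLeft_X_some]
    | .inl ⟨m + 4, h⟩ => exact absurd h (by omega)
    | .inr (.inl i) =>
        show Φ (va K n ^ 4 * vx K n i * vy K n i ^ 2) = _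
        rw [hΦapp]
        simp [va, vx, vy, genJ', ha, hxy, optionEquivLeft_X_some]
    | .inr (.inr i) =>
        show Φ (vb K n ^ 4 * vx K n i ^ 2 * vy K n i) = _
        rw [hΦapp]
        simp [vb, vx, vy, genJ', hb, hxy, optionEquivLeft_X_some]
  set J₀ : Ideal (MvPolynomial (τ n) K) := Ideal.span (Set.range (genJ' K n)) with hJ₀
  have hmap : Ideal.map (Φ : MvPolynomial (Vars n) K →+* Polynomial (MvPolynomial (τ n) K))
      (idealJ K n ^ k) =
      Ideal.map (Polynomial.C : MvPolynomial (τ n) K →+* Polynomial (MvPolynomial (τ n) K))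
        (J₀ ^ k) := by
    rw [Ideal.map_pow, Ideal.map_pow]
    congr 1
    rw [idealJ, Ideal.map_span, hJ₀, Ideal.map_span, ← Set.range_comp, ← Set.range_comp]
    congr 2
    funext j
    simp only [Function.comp_apply, RingEquiv.coe_toRingHom, RingHom.coe_coe]
    exact hΦg j
  have hmem : Φ (f * X v) ∈ Ideal.map
      (Φ : MvPolynomial (Vars n) K →+* Polynomial (MvPolynomial (τ n) K))
      (idealJ K n ^ k) := Ideal.mem_map_of_mem _ hf
  rw [map_mul, hΦv, hmap, Ideal.mem_map_C_iff] at hmem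
  have hcoeff : ∀ m, (Φ f).coeff m ∈ J₀ ^ k := by
    intro m
    have := hmem (m + 1)
    rwa [Polynomial.coeff_mul_X] at this
  have h2 : Φ f ∈ Ideal.map
      (Polynomial.C : MvPolynomial (τ n) K →+* Polynomial (MvPolynomial (τ n) K))
      (J₀ ^ k) := Ideal.mem_map_C_iff.2 hcoeff
  rw [← hmap] at h2
  have h3 := Ideal.mem_map_of_mem
    (Φ.symm : Polynomial (MvPolynomial (τ n) K) →+* MvPolynomial (Vars n) K) h2
  rw [Ideal.map_map] at h3
  have hid : ((Φ.symm : Polynomial (MvPolynomial (τ n) K) →+* MvPolynomial (Vars n) K).comp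
      (Φ : MvPolynomial (Vars n) K →+* Polynomial (MvPolynomial (τ n) K))) =
      RingHom.id _ := RingHom.ext fun p => by simp
  rw [hid, Ideal.map_id] at h3
  simpa using h3

/-- The equivalence dropping the variable `c`. -/
def dropC : Vars n ≃ Option (τ n) where
  toFun := fun v => match v with
    | .inl ⟨0, _⟩ => some (Sum.inl 0)
    | .inl ⟨1, _⟩ => some (Sum.inl 1)
    | .inl ⟨2, _⟩ => none
    | .inl ⟨3, _⟩ => some (Sum.inl 2)
    | .inl ⟨m + 4, h⟩ => absurd h (by omega)
    | .inr w => some (Sum.inr w)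
  invFun := fun o => match o with
    | none => Sum.inl 2
    | some (Sum.inl ⟨0, _⟩) => Sum.inl 0
    | some (Sum.inl ⟨1, _⟩) => Sum.inl 1
    | some (Sum.inl ⟨2, _⟩) => Sum.inl 3
    | some (Sum.inl ⟨m + 3, h⟩) => absurd h (by omega)
    | some (Sum.inr w) => Sum.inr w
  left_inv := by
    rintro (⟨i, hi⟩ | w)
    · interval_cases i <;> rfl
    · rfl
  right_inv := by
    rintro (_ | (⟨i, hi⟩ | w))
    · rfl
    · interval_cases i <;> rfl
    · rfl

/-- The equivalence dropping the variable `d`. -/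
def dropD : Vars n ≃ Option (τ n) where
  toFun := fun v => match v with
    | .inl ⟨0, _⟩ => some (Sum.inl 0)
    | .inl ⟨1, _⟩ => some (Sum.inl 1)
    | .inl ⟨2, _⟩ => some (Sum.inl 2)
    | .inl ⟨3, _⟩ => none
    | .inl ⟨m + 4, h⟩ => absurd h (by omega)
    | .inr w => some (Sum.inr w)
  invFun := fun o => match o with
    | none => Sum.inl 3
    | some (Sum.inl ⟨0, _⟩) => Sum.inl 0
    | some (Sum.inl ⟨1, _⟩) => Sum.inl 1
    | some (Sum.inl ⟨2, _⟩) => Sum.inl 2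
    | some (Sum.inl ⟨m + 3, h⟩) => absurd h (by omega)
    | some (Sum.inr w) => Sum.inr w
  left_inv := by
    rintro (⟨i, hi⟩ | w)
    · interval_cases i <;> rfl
    · rfl
  right_inv := by
    rintro (_ | (⟨i, hi⟩ | w))
    · rfl
    · interval_cases i <;> rfl
    · rfl

lemma colon_J (k : ℕ) (v : MvPolynomial (Vars n) K)
    (hreg : ∀ f : MvPolynomial (Vars n) K, f * v ∈ idealJ K n ^ k → f ∈ idealJ K n ^ k) :
    (idealJ K n ^ k).colon (Ideal.span {v}) = idealJ K n ^ k := by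
  apply le_antisymm
  · intro x hx
    rw [Ideal.mem_colon_span_singleton] at hx
    exact hreg x hx
  · intro x hx
    rw [Ideal.mem_colon_span_singleton]
    exact Ideal.mul_mem_right _ _ hx

end ColonAux

/-- For every integer `k > 2n+1`, one has `Iᵏ : (c) = Iᵏ` and `Iᵏ : (d) = Iᵏ`. -/
theorem colon_c_d_eq_of_large (k : ℕ) (hk : 2 * n + 1 < k) :
    ((idealI K n) ^ k).colon (Ideal.span {vc K n}) = (idealI K n) ^ k ∧
    ((idealI K n) ^ k).colon (Ideal.span {vd K n}) = (idealI K n) ^ k := by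
  rw [ColonAux.pow_eq K n k hk]
  constructor
  · exact ColonAux.colon_J K n k _ (fun f hf =>
      ColonAux.regular K n (ColonAux.dropC n) (Sum.inl 2) rfl rfl rfl (fun w => rfl) k f hf)
  · exact ColonAux.colon_J K n k _ (fun f hf =>
      ColonAux.regular K n (ColonAux.dropD n) (Sum.inl 3) rfl rfl rfl (fun w => rfl) k f hf)
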